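/- Let V be a real vector space with an almost contact 3-structure (Φ_α, ξ_α, η_α), α = 1,2,3, and let g be a compatible inner product (g(ξ_α, x) = η_α(x) and g(Φ_α x, Φ_α y) = g(x,y) - η_α(x)η_α(y) for each α). Then for every point s = (a,b,c) of the unit sphere S² ⊂ ℝ³, the triple Φ_s := aΦ₁ + bΦ₂ + cΦ₃, ξ_s := aξ₁ + bξ₂ + cξ₃, η_s := aη₁ + bη₂ + cη₃ is again an almost contact structure compatible with g, i.e. Φ_s² = -id + η_s⊗ξ_s, η_s(ξ_s) = 1, g(ξ_s, x) = η_s(x), and g(Φ_s x, Φ_s y) = g(x,y) - η_s(x)η_s(y). -/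

import Mathlib

/-!
Each Φ_α is skew-adjoint for g, and the cyclic and anticyclic relations together say that
Φ_α Φ_β + Φ_β Φ_α = η_β ⊗ ξ_α + η_α ⊗ ξ_β for α ≠ β. Expanding Φ_s² and g(Φ_s x, Φ_s y) as
quadratic forms in (a, b, c), only these symmetrised products survive, and the diagonal terms
add up to a² + b² + c² = 1. The same anticommutation relation, evaluated at ξ_β and paired with
η_β, shows that η_α(ξ_β) = 0 for α ≠ β, which gives η_s(ξ_s) = 1.
-/

open RealInnerProductSpace

theorem Finset.sum_sum_mul_smul_eq_of_add_swap {ι M : Type*} [AddCommGroup M] [Module ℝ M]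
    (s : Finset ι) (a : ι → ℝ) {Q R : ι → ι → M} (h : ∀ i j, Q i j + Q j i = R i j + R j i) :
    ∑ i ∈ s, ∑ j ∈ s, (a i * a j) • Q i j = ∑ i ∈ s, ∑ j ∈ s, (a i * a j) • R i j := by
  have symmetrize : ∀ Q : ι → ι → M, (2 : ℝ) • ∑ i ∈ s, ∑ j ∈ s, (a i * a j) • Q i j =
      ∑ i ∈ s, ∑ j ∈ s, (a i * a j) • (Q i j + Q j i) := by
    intro Q
    rw [two_smul]
    nth_rewrite 2 [Finset.sum_comm]
    simp only [smul_add, Finset.sum_add_distrib, mul_comm (a _) (a _)]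
  apply smul_right_injective M (two_ne_zero (α := ℝ))
  simp only [symmetrize, h]

section AlmostContact

variable {V : Type*} [AddCommGroup V] [Module ℝ V]

structure IsAlmostContact (φ : V →ₗ[ℝ] V) (ξ : V) (η : V →ₗ[ℝ] ℝ) : Prop where
  apply_apply : ∀ x, φ (φ x) = -x + η x • ξ
  eta_xi : η ξ = 1

namespace IsAlmostContact

variable {φ : V →ₗ[ℝ] V} {ξ : V} {η : V →ₗ[ℝ] ℝ}

theorem apply_xi (h : IsAlmostContact φ ξ η) : φ ξ = 0 := by
  have hφφξ : φ (φ ξ) = 0 := by rw [h.apply_apply, h.eta_xi, one_smul, neg_add_cancel]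
  -- `φ² (φ ξ) = -φ ξ + η (φ ξ) • ξ` vanishes, so `φ ξ` lies on the line through `ξ`
  have hline : φ ξ = η (φ ξ) • ξ := by
    have := h.apply_apply (φ ξ)
    rw [hφφξ, map_zero] at this
    linear_combination (norm := module) this
  have hsq : (η (φ ξ) * η (φ ξ)) • ξ = 0 := by
    rw [mul_smul, ← hline, ← map_smul, ← hline, hφφξ]
  have := congrArg η hsq
  rw [map_smul, h.eta_xi, map_zero, smul_eq_mul, mul_one, mul_self_eq_zero] at this
  rw [hline, this, zero_smul]

theorem eta_apply (h : IsAlmostContact φ ξ η) (x : V) : η (φ x) = 0 := by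
  have hcube : η (φ x) • ξ = 0 := by
    have := congrArg φ (h.apply_apply x)
    rw [h.apply_apply, map_add, map_neg, map_smul, h.apply_xi, smul_zero, add_zero] at this
    linear_combination (norm := module) this
  simpa [h.eta_xi] using congrArg η hcube

variable {ι : Type*} [Fintype ι] {Φ : ι → V →ₗ[ℝ] V} {ξ : ι → V} {η : ι → V →ₗ[ℝ] ℝ}

theorem sum_smul_apply_apply (h : ∀ i, IsAlmostContact (Φ i) (ξ i) (η i))
    (hanti : ∀ i j, i ≠ j → ∀ x, Φ i (Φ j x) + Φ j (Φ i x) = η j x • ξ i + η i x • ξ j)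
    {a : ι → ℝ} (ha : ∑ i, a i ^ 2 = 1) (x : V) :
    (∑ i, a i • Φ i) ((∑ i, a i • Φ i) x) = -x + (∑ i, a i • η i) x • ∑ i, a i • ξ i := by
  classical
  have hsymm : ∀ i j, Φ j (Φ i x) + Φ i (Φ j x) =
      ((if i = j then -x else 0) + η i x • ξ j) + ((if j = i then -x else 0) + η j x • ξ i) := by
    intro i j
    by_cases hij : i = j
    · subst hij
      simp only [if_true, (h i).apply_apply]
    · simp only [hanti j i (Ne.symm hij), hij, Ne.symm hij, if_false, zero_add]
  calc (∑ i, a i • Φ i) ((∑ i, a i • Φ i) x)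
      = ∑ i, ∑ j, (a i * a j) • Φ j (Φ i x) := by
        simp only [LinearMap.sum_apply, LinearMap.smul_apply, map_sum, map_smul, Finset.smul_sum,
          smul_smul]
    _ = ∑ i, ∑ j, (a i * a j) • ((if i = j then -x else 0) + η i x • ξ j) :=
        Finset.sum_sum_mul_smul_eq_of_add_swap _ _ hsymm
    _ = -x + (∑ i, a i • η i) x • ∑ i, a i • ξ i := by
        rw [LinearMap.sum_apply, Finset.sum_smul]
        simp only [smul_add, Finset.sum_add_distrib, smul_ite, smul_zero, Finset.sum_ite_eq,
          Finset.mem_univ, if_true, ← Finset.sum_smul, ← sq, ha, one_smul, LinearMap.smul_apply,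
          Finset.smul_sum, smul_smul, smul_eq_mul, mul_right_comm _ (a _)]

end IsAlmostContact

end AlmostContact

section AlmostContactMetric

variable {V : Type*} [NormedAddCommGroup V] [InnerProductSpace ℝ V]

structure IsAlmostContactMetric (φ : V →ₗ[ℝ] V) (ξ : V) (η : V →ₗ[ℝ] ℝ) : Prop
    extends IsAlmostContact φ ξ η where
  inner_xi_left : ∀ x, ⟪ξ, x⟫ = η x
  inner_apply_apply : ∀ x y, ⟪φ x, φ y⟫ = ⟪x, y⟫ - η x * η y

namespace IsAlmostContactMetric

variable {φ₁ φ₂ : V →ₗ[ℝ] V} {ξ₁ ξ₂ : V} {η₁ η₂ : V →ₗ[ℝ] ℝ}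

theorem inner_xi_right (h : IsAlmostContactMetric φ₁ ξ₁ η₁) (x : V) : ⟪x, ξ₁⟫ = η₁ x := by
  rw [real_inner_comm, h.inner_xi_left]

theorem inner_apply_left (h : IsAlmostContactMetric φ₁ ξ₁ η₁) (x y : V) :
    ⟪φ₁ x, y⟫ = -⟪x, φ₁ y⟫ := by
  have := h.inner_apply_apply x (φ₁ y)
  rw [h.apply_apply, inner_add_right, inner_neg_right, real_inner_smul_right,
    h.inner_xi_right, h.eta_apply, h.eta_apply] at this
  linarith [real_inner_comm (φ₁ x) y]

section Pair

variable (h₁ : IsAlmostContactMetric φ₁ ξ₁ η₁) (h₂ : IsAlmostContactMetric φ₂ ξ₂ η₂)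
  (hanti : ∀ x, φ₁ (φ₂ x) + φ₂ (φ₁ x) = η₂ x • ξ₁ + η₁ x • ξ₂)
include h₁ h₂ hanti

theorem eta_xi_eq_zero_of_anticomm : η₁ ξ₂ = 0 := by
  have := congrArg η₂ (hanti ξ₂)
  rw [h₂.apply_xi, map_zero, zero_add, h₂.eta_apply, map_add, map_smul, map_smul, h₂.eta_xi,
    smul_eq_mul, smul_eq_mul, mul_one, one_mul, ← h₂.inner_xi_left, h₁.inner_xi_right] at this
  linarith

theorem inner_apply_add_inner_apply_swap (x y : V) :
    ⟪φ₁ x, φ₂ y⟫ + ⟪φ₂ x, φ₁ y⟫ = -(η₁ x * η₂ y + η₂ x * η₁ y) := by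
  rw [h₁.inner_apply_left, h₂.inner_apply_left, ← neg_add, ← inner_add_right, hanti,
    inner_add_right, real_inner_smul_right, real_inner_smul_right,
    h₁.inner_xi_right, h₂.inner_xi_right]
  ring

end Pair

section Family

variable {ι : Type*} [Fintype ι] {Φ : ι → V →ₗ[ℝ] V} {ξ : ι → V} {η : ι → V →ₗ[ℝ] ℝ}
  (h : ∀ i, IsAlmostContactMetric (Φ i) (ξ i) (η i))
  (hanti : ∀ i j, i ≠ j → ∀ x, Φ i (Φ j x) + Φ j (Φ i x) = η j x • ξ i + η i x • ξ j)
  {a : ι → ℝ} (ha : ∑ i, a i ^ 2 = 1)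
include h hanti ha

theorem sum_smul_eta_xi : (∑ i, a i • η i) (∑ i, a i • ξ i) = 1 := by
  classical
  have hηξ : ∀ i j, η i (ξ j) = if i = j then 1 else 0 := by
    intro i j
    split_ifs with hij
    · exact hij ▸ (h i).eta_xi
    · exact (h i).eta_xi_eq_zero_of_anticomm (h j) (hanti i j hij)
  simp only [LinearMap.sum_apply, LinearMap.smul_apply, map_sum, map_smul, smul_eq_mul, hηξ,
    mul_ite, mul_one, mul_zero]
  simpa [pow_two] using ha

theorem sum_smul_inner_apply_apply (x y : V) :
    ⟪(∑ i, a i • Φ i) x, (∑ i, a i • Φ i) y⟫ =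
      ⟪x, y⟫ - (∑ i, a i • η i) x * (∑ i, a i • η i) y := by
  classical
  have hsymm : ∀ i j, ⟪Φ i x, Φ j y⟫ + ⟪Φ j x, Φ i y⟫ =
      ((if i = j then ⟪x, y⟫ else 0) - η i x * η j y) +
        ((if j = i then ⟪x, y⟫ else 0) - η j x * η i y) := by
    intro i j
    by_cases hij : i = j
    · subst hij
      simp only [if_true, (h i).inner_apply_apply]
    · rw [(h i).inner_apply_add_inner_apply_swap (h j) (hanti i j hij)]
      simp only [hij, Ne.symm hij, if_false]
      ring
  calc ⟪(∑ i, a i • Φ i) x, (∑ i, a i • Φ i) y⟫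
      = ∑ i, ∑ j, (a i * a j) • ⟪Φ i x, Φ j y⟫ := by
        rw [LinearMap.sum_apply, sum_inner]
        simp only [LinearMap.sum_apply, LinearMap.smul_apply, inner_sum, real_inner_smul_left,
          real_inner_smul_right, smul_eq_mul, mul_assoc]
        exact Finset.sum_congr rfl fun _ _ => Finset.sum_congr rfl fun _ _ => mul_left_comm _ _ _
    _ = ∑ i, ∑ j, (a i * a j) • ((if i = j then ⟪x, y⟫ else 0) - η i x * η j y) :=
        Finset.sum_sum_mul_smul_eq_of_add_swap _ _ hsymm
    _ = ⟪x, y⟫ - (∑ i, a i • η i) x * (∑ i, a i • η i) y := by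
        rw [LinearMap.sum_apply, LinearMap.sum_apply, Finset.sum_mul_sum]
        simp only [LinearMap.smul_apply, smul_eq_mul, mul_sub, Finset.sum_sub_distrib, mul_ite,
          mul_zero, Finset.sum_ite_eq, Finset.mem_univ, if_true, ← Finset.sum_mul, ← sq, ha,
          one_mul, mul_mul_mul_comm]

theorem sum_smul :
    IsAlmostContactMetric (∑ i, a i • Φ i) (∑ i, a i • ξ i) (∑ i, a i • η i) where
  apply_apply := IsAlmostContact.sum_smul_apply_apply (fun i => (h i).toIsAlmostContact) hanti ha
  eta_xi := sum_smul_eta_xi h hanti ha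
  inner_xi_left x := by simp [sum_inner, real_inner_smul_left, (h _).inner_xi_left]
  inner_apply_apply := sum_smul_inner_apply_apply h hanti ha

end Family

end IsAlmostContactMetric

end AlmostContactMetric

theorem stmt9_general {V : Type*} [NormedAddCommGroup V] [InnerProductSpace ℝ V]
    (Φ₁ Φ₂ Φ₃ : V →ₗ[ℝ] V) (ξ₁ ξ₂ ξ₃ : V) (η₁ η₂ η₃ : V →ₗ[ℝ] ℝ)
    (hΦ₁ : ∀ x : V, Φ₁ (Φ₁ x) = -x + η₁ x • ξ₁) (hη₁ : η₁ ξ₁ = 1)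
    (hΦ₂ : ∀ x : V, Φ₂ (Φ₂ x) = -x + η₂ x • ξ₂) (hη₂ : η₂ ξ₂ = 1)
    (hΦ₃ : ∀ x : V, Φ₃ (Φ₃ x) = -x + η₃ x • ξ₃) (hη₃ : η₃ ξ₃ = 1)
    -- cyclic relations
    (hc12 : ∀ x : V, Φ₁ (Φ₂ x) - η₂ x • ξ₁ = Φ₃ x)
    (hc23 : ∀ x : V, Φ₂ (Φ₃ x) - η₃ x • ξ₂ = Φ₁ x)
    (hc31 : ∀ x : V, Φ₃ (Φ₁ x) - η₁ x • ξ₃ = Φ₂ x)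
    -- anticyclic counterparts
    (ha12 : ∀ x : V, -Φ₂ (Φ₁ x) + η₁ x • ξ₂ = Φ₃ x)
    (ha23 : ∀ x : V, -Φ₃ (Φ₂ x) + η₂ x • ξ₃ = Φ₁ x)
    (ha31 : ∀ x : V, -Φ₁ (Φ₃ x) + η₃ x • ξ₁ = Φ₂ x)
    -- compatible inner product
    (hg1 : ∀ x : V, ⟪ξ₁, x⟫ = η₁ x)
    (hg2 : ∀ x : V, ⟪ξ₂, x⟫ = η₂ x)
    (hg3 : ∀ x : V, ⟪ξ₃, x⟫ = η₃ x)
    (hgΦ1 : ∀ x y : V, ⟪Φ₁ x, Φ₁ y⟫ = ⟪x, y⟫ - η₁ x * η₁ y)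
    (hgΦ2 : ∀ x y : V, ⟪Φ₂ x, Φ₂ y⟫ = ⟪x, y⟫ - η₂ x * η₂ y)
    (hgΦ3 : ∀ x y : V, ⟪Φ₃ x, Φ₃ y⟫ = ⟪x, y⟫ - η₃ x * η₃ y)
    (a b c : ℝ) (hs : a ^ 2 + b ^ 2 + c ^ 2 = 1)
    (Φs : V →ₗ[ℝ] V) (ξs : V) (ηs : V →ₗ[ℝ] ℝ)
    (hΦs : Φs = a • Φ₁ + b • Φ₂ + c • Φ₃)
    (hξs : ξs = a • ξ₁ + b • ξ₂ + c • ξ₃)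
    (hηs : ηs = a • η₁ + b • η₂ + c • η₃) :
    (∀ x : V, Φs (Φs x) = -x + ηs x • ξs) ∧
    ηs ξs = 1 ∧
    (∀ x : V, ⟪ξs, x⟫ = ηs x) ∧
    (∀ x y : V, ⟪Φs x, Φs y⟫ = ⟪x, y⟫ - ηs x * ηs y) := by
  have hmetric : ∀ i, IsAlmostContactMetric (![Φ₁, Φ₂, Φ₃] i) (![ξ₁, ξ₂, ξ₃] i)
      (![η₁, η₂, η₃] i) := by
    intro i
    fin_cases i
    exacts [⟨⟨hΦ₁, hη₁⟩, hg1, hgΦ1⟩, ⟨⟨hΦ₂, hη₂⟩, hg2, hgΦ2⟩, ⟨⟨hΦ₃, hη₃⟩, hg3, hgΦ3⟩]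
  -- each cyclic relation minus its anticyclic counterpart is an anticommutation relation
  have hanti : ∀ i j, i ≠ j → ∀ x, ![Φ₁, Φ₂, Φ₃] i (![Φ₁, Φ₂, Φ₃] j x) +
      ![Φ₁, Φ₂, Φ₃] j (![Φ₁, Φ₂, Φ₃] i x) =
        ![η₁, η₂, η₃] j x • ![ξ₁, ξ₂, ξ₃] i + ![η₁, η₂, η₃] i x • ![ξ₁, ξ₂, ξ₃] j := by
    intro i j hij x
    fin_cases i <;> fin_cases j <;>
      simp only [Fin.zero_eta, Fin.mk_one, Fin.reduceFinMk, Fin.isValue, Matrix.cons_val,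
        Matrix.cons_val_zero, Matrix.cons_val_one, ne_eq, not_true_eq_false] at hij ⊢ <;>
      first
      | linear_combination (norm := module) hc12 x - ha12 x
      | linear_combination (norm := module) hc23 x - ha23 x
      | linear_combination (norm := module) hc31 x - ha31 x
  have hsphere := IsAlmostContactMetric.sum_smul hmetric hanti (a := ![a, b, c])
    (by simpa [Fin.sum_univ_three] using hs)
  simp only [Fin.sum_univ_three, Matrix.cons_val_zero, Matrix.cons_val_one, Matrix.cons_val_two,
    Matrix.head_cons, Matrix.tail_cons] at hsphere
  subst hΦs hξs hηs
  exact ⟨hsphere.apply_apply, hsphere.eta_xi, hsphere.inner_xi_left, hsphere.inner_apply_apply⟩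

theorem stmt9 {V : Type*} [NormedAddCommGroup V] [InnerProductSpace ℝ V]
    (Φ₁ Φ₂ Φ₃ : V →ₗ[ℝ] V) (ξ₁ ξ₂ ξ₃ : V) (η₁ η₂ η₃ : V →ₗ[ℝ] ℝ)
    (hΦ₁ : ∀ x : V, Φ₁ (Φ₁ x) = -x + η₁ x • ξ₁) (hη₁ : η₁ ξ₁ = 1)
    (hΦ₂ : ∀ x : V, Φ₂ (Φ₂ x) = -x + η₂ x • ξ₂) (hη₂ : η₂ ξ₂ = 1)
    (hΦ₃ : ∀ x : V, Φ₃ (Φ₃ x) = -x + η₃ x • ξ₃) (hη₃ : η₃ ξ₃ = 1)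
    -- cyclic relations
    (hc12 : ∀ x : V, Φ₁ (Φ₂ x) - η₂ x • ξ₁ = Φ₃ x)
    (hc23 : ∀ x : V, Φ₂ (Φ₃ x) - η₃ x • ξ₂ = Φ₁ x)
    (hc31 : ∀ x : V, Φ₃ (Φ₁ x) - η₁ x • ξ₃ = Φ₂ x)
    -- anticyclic counterparts
    (ha12 : ∀ x : V, -Φ₂ (Φ₁ x) + η₁ x • ξ₂ = Φ₃ x)
    (ha23 : ∀ x : V, -Φ₃ (Φ₂ x) + η₂ x • ξ₃ = Φ₁ x)
    (ha31 : ∀ x : V, -Φ₁ (Φ₃ x) + η₃ x • ξ₁ = Φ₂ x)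
    (hξ12 : Φ₁ ξ₂ = ξ₃) (hξ23 : Φ₂ ξ₃ = ξ₁) (hξ31 : Φ₃ ξ₁ = ξ₂)
    (hξ21 : Φ₂ ξ₁ = -ξ₃) (hξ32 : Φ₃ ξ₂ = -ξ₁) (hξ13 : Φ₁ ξ₃ = -ξ₂)
    (hη12 : ∀ x : V, η₁ (Φ₂ x) = η₃ x)
    (hη23 : ∀ x : V, η₂ (Φ₃ x) = η₁ x)
    (hη31 : ∀ x : V, η₃ (Φ₁ x) = η₂ x)
    (hη21 : ∀ x : V, η₂ (Φ₁ x) = -η₃ x)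
    (hη32 : ∀ x : V, η₃ (Φ₂ x) = -η₁ x)
    (hη13 : ∀ x : V, η₁ (Φ₃ x) = -η₂ x)
    -- compatible inner product
    (hg1 : ∀ x : V, ⟪ξ₁, x⟫ = η₁ x)
    (hg2 : ∀ x : V, ⟪ξ₂, x⟫ = η₂ x)
    (hg3 : ∀ x : V, ⟪ξ₃, x⟫ = η₃ x)
    (hgΦ1 : ∀ x y : V, ⟪Φ₁ x, Φ₁ y⟫ = ⟪x, y⟫ - η₁ x * η₁ y)
    (hgΦ2 : ∀ x y : V, ⟪Φ₂ x, Φ₂ y⟫ = ⟪x, y⟫ - η₂ x * η₂ y)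
    (hgΦ3 : ∀ x y : V, ⟪Φ₃ x, Φ₃ y⟫ = ⟪x, y⟫ - η₃ x * η₃ y)
    (a b c : ℝ) (hs : a ^ 2 + b ^ 2 + c ^ 2 = 1)
    (Φs : V →ₗ[ℝ] V) (ξs : V) (ηs : V →ₗ[ℝ] ℝ)
    (hΦs : Φs = a • Φ₁ + b • Φ₂ + c • Φ₃)
    (hξs : ξs = a • ξ₁ + b • ξ₂ + c • ξ₃)
    (hηs : ηs = a • η₁ + b • η₂ + c • η₃) :
    (∀ x : V, Φs (Φs x) = -x + ηs x • ξs) ∧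
    ηs ξs = 1 ∧
    (∀ x : V, ⟪ξs, x⟫ = ηs x) ∧
    (∀ x y : V, ⟪Φs x, Φs y⟫ = ⟪x, y⟫ - ηs x * ηs y) :=
  stmt9_general Φ₁ Φ₂ Φ₃ ξ₁ ξ₂ ξ₃ η₁ η₂ η₃ hΦ₁ hη₁ hΦ₂ hη₂ hΦ₃ hη₃ hc12 hc23 hc31 ha12 ha23 ha31 hg1
    hg2 hg3 hgΦ1 hgΦ2 hgΦ3 a b c hs Φs ξs ηs hΦs hξs hηs
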